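/- Let Y be a mean zero random variable with variance σ² ∈ (0,∞), and let Y* be defined on the same probability space and have the Y-zero biased distribution. Suppose Y − Y* ≤ c almost surely for some constant c > 0, and that the moment generating function m(s) = E[exp(sY)] is finite for all s ∈ (−1/c, 0]. Then for all t ≥ 0, P(Y ≤ −t) ≤ exp(−t² / (2(σ² + ct))). -/

import Mathlib

/-!
Let `m` be the moment generating function of `Y`. Testing the zero-bias identity against
`f y = exp (u * y)` gives `m' u = σ² u E[exp (u Y*)]` for `u ∈ (-1/c, 0)`. Since `Y* ≥ Y - c` and
`u ≤ 0`, `E[exp (u Y*)] ≤ exp (-u c) m u ≤ m u / (1 + u c)`, so on `[s, 0]` the mgf satisfies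
`m' u ≥ a u m u` with `a = σ² / (1 + s c)`. Comparing with `exp (a u² / 2)` gives
`m s ≤ exp (a s² / 2)`, and the Chernoff bound at `s = -t / (σ² + c t)`, where `a = σ² + c t`,
yields the tail bound.
-/

open MeasureTheory ProbabilityTheory Real

/-- `Ystar` has the `Y`-zero biased distribution with respect to variance `σ2`:
`E[Y f(Y)] = σ2 * E[f'(Ystar)]` for every (absolutely continuous) differentiable
function `f` with derivative `f'` for which both expectations exist. -/
def ZeroBiased {Ω : Type*} [MeasurableSpace Ω] (μ : Measure Ω)
    (Y Ystar : Ω → ℝ) (σ2 : ℝ) : Prop :=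
  ∀ f f' : ℝ → ℝ, (∀ x, HasDerivAt f (f' x) x) →
    Integrable (fun ω => Y ω * f (Y ω)) μ →
    Integrable (fun ω => f' (Ystar ω)) μ →
    ∫ ω, Y ω * f (Y ω) ∂μ = σ2 * ∫ ω, f' (Ystar ω) ∂μ

open Set

lemma exp_mul_le_exp_mul_add_exp_mul {a b t : ℝ} (x : ℝ) (hat : a ≤ t) (htb : t ≤ b) :
    exp (t * x) ≤ exp (a * x) + exp (b * x) := by
  rcases le_total 0 x with hx | hx
  · linarith [exp_le_exp.2 (mul_le_mul_of_nonneg_right htb hx), exp_pos (a * x)]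
  · linarith [exp_le_exp.2 (mul_le_mul_of_nonpos_right hat hx), exp_pos (b * x)]

lemma monotoneOn_mul_exp_neg_sq {f f' : ℝ → ℝ} {a s b : ℝ} (hf : ContinuousOn f (Icc s b))
    (hf' : ∀ u ∈ Ioo s b, HasDerivAt f (f' u) u) (hle : ∀ u ∈ Ioo s b, a * u * f u ≤ f' u) :
    MonotoneOn (fun u ↦ f u * exp (-(a * u ^ 2) / 2)) (Icc s b) := by
  have hg (u : ℝ) : HasDerivAt (fun u ↦ exp (-(a * u ^ 2) / 2))
      (exp (-(a * u ^ 2) / 2) * -(a * u)) u := by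
    have h : HasDerivAt (fun u : ℝ ↦ -(a * u ^ 2) / 2) (-(a * u)) u :=
      (((hasDerivAt_pow 2 u).const_mul a).fun_neg.div_const 2).congr_deriv (by push_cast; ring)
    exact h.exp
  refine monotoneOn_of_hasDerivWithinAt_nonneg (convex_Icc s b)
    (f' := fun u ↦ (f' u - a * u * f u) * exp (-(a * u ^ 2) / 2))
    (hf.mul (Continuous.continuousOn (by fun_prop))) (fun u hu ↦ ?_) (fun u hu ↦ ?_)
  all_goals rw [interior_Icc] at hu
  · exact (((hf' u hu).mul (hg u)).congr_deriv (by ring)).hasDerivWithinAt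
  · exact mul_nonneg (sub_nonneg.2 (hle u hu)) (exp_pos _).le

section Mgf

variable {Ω : Type*} [MeasurableSpace Ω] {μ : Measure Ω}

lemma continuousOn_mgf_Icc {X : Ω → ℝ} {a b : ℝ} (ha : Integrable (fun ω ↦ exp (a * X ω)) μ)
    (hb : Integrable (fun ω ↦ exp (b * X ω)) μ) : ContinuousOn (mgf X μ) (Icc a b) :=
  continuousOn_of_dominated (fun t ht ↦ (integrable_exp_mul_of_le_of_le ha hb ht.1 ht.2).1)
    (fun t ht ↦ ae_of_all _ fun ω ↦ by
      rw [norm_eq_abs, abs_exp]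
      exact exp_mul_le_exp_mul_add_exp_mul _ ht.1 ht.2)
    (ha.add hb) (ae_of_all _ fun ω ↦ Continuous.continuousOn (by fun_prop))

variable {Y Ystar : Ω → ℝ} {σ2 c u : ℝ}

lemma exp_mul_le_exp_mul_of_sub_le {y y' : ℝ} (hu : u ≤ 0) (h : y - y' ≤ c) :
    exp (u * y') ≤ exp (-(u * c)) * exp (u * y) := by
  rw [← exp_add]
  exact exp_le_exp.2 (by nlinarith)

lemma integrable_exp_mul_of_sub_le (hYstar : AEMeasurable Ystar μ)
    (hbdd : ∀ᵐ ω ∂μ, Y ω - Ystar ω ≤ c) (hu : u ≤ 0)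
    (hint : Integrable (fun ω ↦ exp (u * Y ω)) μ) :
    Integrable (fun ω ↦ exp (u * Ystar ω)) μ :=
  (hint.const_mul (exp (-(u * c)))).mono'
    (measurable_exp.comp_aemeasurable (hYstar.const_mul u)).aestronglyMeasurable
    (by filter_upwards [hbdd] with ω hω
        rw [norm_eq_abs, abs_exp]
        exact exp_mul_le_exp_mul_of_sub_le hu hω)

lemma integral_exp_mul_le_of_sub_le (hYstar : AEMeasurable Ystar μ)
    (hbdd : ∀ᵐ ω ∂μ, Y ω - Ystar ω ≤ c) (hu : u ≤ 0)
    (hint : Integrable (fun ω ↦ exp (u * Y ω)) μ) :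
    ∫ ω, exp (u * Ystar ω) ∂μ ≤ exp (-(u * c)) * mgf Y μ u := by
  rw [mgf, ← integral_const_mul]
  exact integral_mono_ae (integrable_exp_mul_of_sub_le hYstar hbdd hu hint) (hint.const_mul _)
    (by filter_upwards [hbdd] with ω hω using exp_mul_le_exp_mul_of_sub_le hu hω)

lemma ZeroBiased.hasDerivAt_mgf (hzb : ZeroBiased μ Y Ystar σ2)
    (hu : u ∈ interior (integrableExpSet Y μ))
    (hstar : Integrable (fun ω ↦ exp (u * Ystar ω)) μ) :
    HasDerivAt (mgf Y μ) (σ2 * (u * ∫ ω, exp (u * Ystar ω) ∂μ)) u := by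
  have hf (x : ℝ) : HasDerivAt (fun y ↦ exp (u * y)) (u * exp (u * x)) x := by
    simpa [mul_comm] using ((hasDerivAt_id x).const_mul u).exp
  convert ProbabilityTheory.hasDerivAt_mgf hu using 1
  rw [hzb _ _ hf (by simpa using integrable_pow_mul_exp_of_mem_interior_integrableExpSet hu 1)
    (hstar.const_mul u), integral_const_mul]

lemma mul_mgf_le_of_sub_le {s : ℝ} (hσ2 : 0 ≤ σ2) (hc : 0 ≤ c) (hYstar : AEMeasurable Ystar μ)
    (hbdd : ∀ᵐ ω ∂μ, Y ω - Ystar ω ≤ c) (hint : Integrable (fun ω ↦ exp (u * Y ω)) μ)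
    (hsu : s ≤ u) (hu : u ≤ 0) (hsc : 0 < 1 + s * c) :
    σ2 / (1 + s * c) * u * mgf Y μ u ≤ σ2 * (u * ∫ ω, exp (u * Ystar ω) ∂μ) := by
  have hexp : exp (-(u * c)) ≤ (1 + s * c)⁻¹ := by
    rw [exp_neg]
    have hsc_le : 1 + s * c ≤ 1 + u * c := by nlinarith
    exact inv_anti₀ hsc (hsc_le.trans (by linarith [add_one_le_exp (u * c)]))
  calc σ2 / (1 + s * c) * u * mgf Y μ u = σ2 * (u * ((1 + s * c)⁻¹ * mgf Y μ u)) := by ring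
    _ ≤ σ2 * (u * (exp (-(u * c)) * mgf Y μ u)) :=
      mul_le_mul_of_nonneg_left (mul_le_mul_of_nonpos_left
        (mul_le_mul_of_nonneg_right hexp mgf_nonneg) hu) hσ2
    _ ≤ σ2 * (u * ∫ ω, exp (u * Ystar ω) ∂μ) :=
      mul_le_mul_of_nonneg_left (mul_le_mul_of_nonpos_left
        (integral_exp_mul_le_of_sub_le hYstar hbdd hu hint) hu) hσ2

lemma ZeroBiased.mgf_le_exp [IsProbabilityMeasure μ] {s : ℝ} (hσ2 : 0 ≤ σ2) (hc : 0 < c)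
    (hYstar : AEMeasurable Ystar μ) (hzb : ZeroBiased μ Y Ystar σ2)
    (hbdd : ∀ᵐ ω ∂μ, Y ω - Ystar ω ≤ c)
    (hmgf : ∀ s ∈ Ioc (-(1 / c)) 0, Integrable (fun ω ↦ exp (s * Y ω)) μ)
    (hs : s ∈ Ioc (-(1 / c)) 0) :
    mgf Y μ s ≤ exp (σ2 / (1 + s * c) * s ^ 2 / 2) := by
  have hsc : 0 < 1 + s * c := by
    have h := hs.1
    rw [← neg_div, div_lt_iff₀ hc] at h
    linarith
  have hsub : Ioo s 0 ⊆ Ioo (-(1 / c)) 0 := Ioo_subset_Ioo_left hs.1.le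
  have hint : Ioo s 0 ⊆ interior (integrableExpSet Y μ) :=
    hsub.trans (interior_Ioc.symm.subset.trans (interior_mono hmgf))
  have hmgf' (u : ℝ) (hu : u ∈ Ioo s 0) : Integrable (fun ω ↦ exp (u * Y ω)) μ :=
    hmgf u (Ioo_subset_Ioc_self (hsub hu))
  have hmono := monotoneOn_mul_exp_neg_sq (a := σ2 / (1 + s * c))
    (continuousOn_mgf_Icc (hmgf s hs) (hmgf 0 (right_mem_Ioc.2 (neg_lt_zero.2 (by positivity)))))
    (fun u hu ↦ hzb.hasDerivAt_mgf (hint hu)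
      (integrable_exp_mul_of_sub_le hYstar hbdd hu.2.le (hmgf' u hu)))
    (fun u hu ↦ mul_mgf_le_of_sub_le hσ2 hc.le hYstar hbdd (hmgf' u hu) hu.1.le hu.2.le hsc)
  have hG : mgf Y μ s * exp (-(σ2 / (1 + s * c) * s ^ 2) / 2) ≤ 1 := by
    simpa [mgf_zero] using hmono (left_mem_Icc.2 hs.2) (right_mem_Icc.2 hs.2) hs.2
  rwa [← le_div_iff₀ (exp_pos _), one_div, ← exp_neg, neg_div, neg_neg] at hG

end Mgf

theorem zero_bias_left_tail_general
    {Ω : Type*} [MeasurableSpace Ω] (μ : Measure Ω) [IsProbabilityMeasure μ]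
    (Y Ystar : Ω → ℝ) (hYstar : Measurable Ystar)
    (σ2 : ℝ) (hσ2 : 0 < σ2)
    (hzb : ZeroBiased μ Y Ystar σ2)
    (c : ℝ) (hc : 0 < c)
    (hbdd : ∀ᵐ ω ∂μ, Y ω - Ystar ω ≤ c)
    (hmgf : ∀ s ∈ Set.Ioc (-(1 / c)) (0 : ℝ), Integrable (fun ω => exp (s * Y ω)) μ) :
    ∀ t : ℝ, 0 ≤ t →
      (μ {ω | Y ω ≤ -t}).toReal ≤ exp (-(t ^ 2) / (2 * (σ2 + c * t))) := by
  intro t ht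
  set D := σ2 + c * t
  have hD : 0 < D := by positivity
  have hs : -t / D ∈ Ioc (-(1 / c)) 0 := by
    refine ⟨?_, div_nonpos_of_nonpos_of_nonneg (neg_nonpos.2 ht) hD.le⟩
    rw [neg_div, neg_lt_neg_iff, div_lt_div_iff₀ hD hc]
    linarith
  have ha : σ2 / (1 + -t / D * c) = D := by
    rw [show 1 + -t / D * c = σ2 / D by field_simp; ring, div_div_cancel₀ hσ2.ne']
  calc (μ {ω | Y ω ≤ -t}).toReal ≤ exp (-(-t / D) * -t) * mgf Y μ (-t / D) :=
        measure_le_le_exp_mul_mgf (-t) hs.2 (hmgf _ hs)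
    _ ≤ exp (-(-t / D) * -t) * exp (D * (-t / D) ^ 2 / 2) := by
        gcongr
        simpa only [ha] using hzb.mgf_le_exp hσ2.le hc hYstar.aemeasurable hbdd hmgf hs
    _ = exp (-(t ^ 2) / (2 * D)) := by
        rw [← exp_add]
        congr 1
        field_simp
        ring

theorem zero_bias_left_tail
    {Ω : Type*} [MeasurableSpace Ω] (μ : Measure Ω) [IsProbabilityMeasure μ]
    (Y Ystar : Ω → ℝ) (hY : Measurable Y) (hYstar : Measurable Ystar)
    (σ2 : ℝ) (hσ2 : 0 < σ2)
    (hmean : ∫ ω, Y ω ∂μ = 0) (hL2 : MemLp Y 2 μ) (hvar : variance Y μ = σ2)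
    (hzb : ZeroBiased μ Y Ystar σ2)
    (c : ℝ) (hc : 0 < c)
    (hbdd : ∀ᵐ ω ∂μ, Y ω - Ystar ω ≤ c)
    (hmgf : ∀ s ∈ Set.Ioc (-(1 / c)) (0 : ℝ), Integrable (fun ω => exp (s * Y ω)) μ) :
    ∀ t : ℝ, 0 ≤ t →
      (μ {ω | Y ω ≤ -t}).toReal ≤ exp (-(t ^ 2) / (2 * (σ2 + c * t))) :=
  zero_bias_left_tail_general μ Y Ystar hYstar σ2 hσ2 hzb c hc hbdd hmgf
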